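/- Let J be a finite set, and let a, d, c : J → ℝ satisfy a j ≤ d j and c j ≥ 0 for all j ∈ J. Then the following are equivalent: (1) there exists a family (S_j)_{j∈J} of pairwise disjoint measurable subsets of ℝ with S_j ⊆ [a j, d j] and Lebesgue measure of S_j at least c j for every j ∈ J; (2) for all real numbers ℓ ≤ r, the sum of c j over all j ∈ J with ℓ ≤ a j and d j ≤ r is at most r − ℓ. -/

import Mathlib

/-!
Necessity: disjoint sets inside `[ℓ, r]` have total measure at most `r - ℓ`.

Sufficiency, by induction on the number of jobs: the job `j₀` with the earliest deadline gets
the slot `(a₀, a₀ + c₀]`, which fits by the demand bound on `[a₀, d j₀]`. Cutting this slot out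
of the time line (`collapse`) leaves an instance for the other jobs that still satisfies the
demand bound: `collapse` has a lower adjoint `lowerExpand` and an upper adjoint `upperExpand`,
so a collapsed window lies in `[ℓ, r]` iff the original one lies in
`[lowerExpand ℓ, upperExpand r]`, an interval longer than `[ℓ, r]` by `c₀` only when it
straddles the slot, and then it also contains the window of `j₀`. A schedule of the collapsed
instance is carried back by `lowerExpand`, which preserves volume off the point `a₀`.
-/

open MeasureTheory Set

noncomputable section Compression

variable {a₀ c₀ s t : ℝ}

/-- The time line with the slot `(a₀, a₀ + c₀]` cut out. -/
def collapse (a₀ c₀ t : ℝ) : ℝ := if t ≤ a₀ then t else max a₀ (t - c₀)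

def lowerExpand (a₀ c₀ t : ℝ) : ℝ := if t ≤ a₀ then t else t + c₀

def upperExpand (a₀ c₀ t : ℝ) : ℝ := if t < a₀ then t else t + c₀

theorem gc_lowerExpand_collapse (hc : 0 ≤ c₀) :
    GaloisConnection (lowerExpand a₀ c₀) (collapse a₀ c₀) := by
  intro s t
  unfold lowerExpand collapse
  split_ifs <;> grind

theorem gc_collapse_upperExpand (hc : 0 ≤ c₀) :
    GaloisConnection (collapse a₀ c₀) (upperExpand a₀ c₀) := by
  intro s t
  unfold upperExpand collapse
  split_ifs <;> grind

theorem upperExpand_eq_lowerExpand (h : t ≠ a₀) : upperExpand a₀ c₀ t = lowerExpand a₀ c₀ t := by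
  unfold upperExpand lowerExpand
  grind

theorem upperExpand_sub_lowerExpand (h : s ≤ t) :
    upperExpand a₀ c₀ t - lowerExpand a₀ c₀ s = t - s + if s ≤ a₀ ∧ a₀ ≤ t then c₀ else 0 := by
  unfold upperExpand lowerExpand
  split_ifs <;> grind

theorem lowerExpand_strictMono (hc : 0 ≤ c₀) : StrictMono (lowerExpand a₀ c₀) := by
  intro s t h
  unfold lowerExpand
  split_ifs <;> linarith

theorem lowerExpand_notMem_Ioc : lowerExpand a₀ c₀ t ∉ Ioc a₀ (a₀ + c₀) := by
  unfold lowerExpand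
  split_ifs <;> simp only [mem_Ioc, not_and, not_le] <;> intro h' <;> linarith

theorem hasDerivAt_lowerExpand (h : t ≠ a₀) : HasDerivAt (lowerExpand a₀ c₀) 1 t := by
  rcases h.lt_or_gt with h | h
  · exact (hasDerivAt_id t).congr_of_eventuallyEq
      (Filter.eventually_of_mem (Iio_mem_nhds h) fun u hu => if_pos (le_of_lt hu))
  · exact ((hasDerivAt_id t).add_const c₀).congr_of_eventuallyEq
      (Filter.eventually_of_mem (Ioi_mem_nhds h) fun u hu => if_neg (not_le.2 hu))

theorem MeasurableSet.image_lowerExpand (hc : 0 ≤ c₀) {X : Set ℝ} (hX : MeasurableSet X) :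
    MeasurableSet (lowerExpand a₀ c₀ '' X) :=
  hX.image_of_measurable_injOn (lowerExpand_strictMono hc).monotone.measurable
    (lowerExpand_strictMono hc).injective.injOn

theorem volume_image_lowerExpand (hc : 0 ≤ c₀) {X : Set ℝ} (hX : MeasurableSet X) (ha : a₀ ∉ X) :
    volume (lowerExpand a₀ c₀ '' X) = volume X := by
  have := lintegral_image_eq_lintegral_abs_deriv_mul hX
    (fun x hx => (hasDerivAt_lowerExpand (ne_of_mem_of_not_mem hx ha)).hasDerivWithinAt)
    (lowerExpand_strictMono hc).injective.injOn (fun _ => 1)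
  simpa using this

end Compression

noncomputable section Scheduling

variable {J : Type*} {s : Finset J} {a d c : J → ℝ} {S : J → Set ℝ} {ℓ r : ℝ}

variable (s a d c) in
def demand (ℓ r : ℝ) : ℝ := ∑ j ∈ s with ℓ ≤ a j ∧ d j ≤ r, c j

variable (s a d c) in
def IsSchedule (S : J → Set ℝ) : Prop :=
  (s : Set J).PairwiseDisjoint S ∧
    ∀ j ∈ s, MeasurableSet (S j) ∧ S j ⊆ Icc (a j) (d j) ∧ c j ≤ volume.real (S j)

theorem IsSchedule.demand_le (hS : IsSchedule s a d c S) (hℓr : ℓ ≤ r) :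
    demand s a d c ℓ r ≤ r - ℓ := by
  set T := s.filter fun j => ℓ ≤ a j ∧ d j ≤ r
  have hT : T ⊆ s := Finset.filter_subset _ s
  have hsub : ∀ j ∈ T, S j ⊆ Icc ℓ r := fun j hj => by
    obtain ⟨hjs, hℓ, hr⟩ := Finset.mem_filter.1 hj
    exact (hS.2 j hjs).2.1.trans (Icc_subset_Icc hℓ hr)
  calc demand s a d c ℓ r ≤ ∑ j ∈ T, volume.real (S j) :=
        Finset.sum_le_sum fun j hj => (hS.2 j (hT hj)).2.2
    _ = volume.real (⋃ j ∈ T, S j) :=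
        (measureReal_biUnion_finset (hS.1.subset (Finset.coe_subset.2 hT))
          (fun j hj => (hS.2 j (hT hj)).1)
          (fun j hj => ((measure_mono (hsub j hj)).trans_lt measure_Icc_lt_top).ne)).symm
    _ ≤ volume.real (Icc ℓ r) := measureReal_mono (iUnion₂_subset hsub) measure_Icc_lt_top.ne
    _ = r - ℓ := Real.volume_real_Icc_of_le hℓr

theorem IsSchedule.insert [DecidableEq J] {j : J} {X : Set ℝ} (hS : IsSchedule s a d c S)
    (hj : j ∉ s) (hX : MeasurableSet X) (hXw : X ⊆ Icc (a j) (d j)) (hXc : c j ≤ volume.real X)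
    (hdisj : ∀ i ∈ s, Disjoint X (S i)) :
    IsSchedule (insert j s) a d c (Function.update S j X) := by
  have hupd : ∀ i ∈ s, Function.update S j X i = S i := fun i hi =>
    Function.update_of_ne (ne_of_mem_of_not_mem hi hj) X S
  refine ⟨?_, ?_⟩
  · rw [Finset.coe_insert, pairwiseDisjoint_insert]
    refine ⟨fun i hi i' hi' hii' => ?_, fun i hi _ => ?_⟩
    · rw [Function.onFun, hupd i hi, hupd i' hi']
      exact hS.1 hi hi' hii'
    · rw [Function.update_self, hupd i hi]
      exact hdisj i hi
  · intro i hi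
    rcases Finset.mem_insert.1 hi with rfl | hi
    · rw [Function.update_self]
      exact ⟨hX, hXw, hXc⟩
    · rw [hupd i hi]
      exact hS.2 i hi

theorem IsSchedule.image_lowerExpand {a₀ c₀ : ℝ} (hc : 0 ≤ c₀)
    (hS : IsSchedule s (collapse a₀ c₀ ∘ a) (collapse a₀ c₀ ∘ d) c S) :
    IsSchedule s a d c fun j => lowerExpand a₀ c₀ '' (S j \ {a₀}) := by
  have hinj := (lowerExpand_strictMono (a₀ := a₀) hc).injective
  refine ⟨fun i hi j hj hij => ?_, fun j hj => ?_⟩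
  · exact (disjoint_image_iff hinj).2 ((hS.1 hi hj hij).mono sdiff_subset sdiff_subset)
  obtain ⟨hm, hw, hv⟩ := hS.2 j hj
  refine ⟨(hm.diff (measurableSet_singleton a₀)).image_lowerExpand hc, ?_, ?_⟩
  · rintro _ ⟨t, ⟨ht, hta⟩, rfl⟩
    refine ⟨?_, (gc_lowerExpand_collapse hc _ _).2 (hw ht).2⟩
    rw [← upperExpand_eq_lowerExpand hta]
    exact (gc_collapse_upperExpand hc _ _).1 (hw ht).1
  · rw [measureReal_def, volume_image_lowerExpand hc (hm.diff (measurableSet_singleton a₀))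
      (fun h => h.2 rfl), measure_sdiff_null Real.volume_singleton]
    exact hv

end Scheduling

noncomputable section Sufficiency

variable {J : Type*} [DecidableEq J] {s : Finset J} {a d c : J → ℝ} {ℓ r : ℝ}

theorem demand_eq_demand_erase_add {j : J} (hj : j ∈ s) :
    demand s a d c ℓ r = demand (s.erase j) a d c ℓ r + if ℓ ≤ a j ∧ d j ≤ r then c j else 0 := by
  simp only [demand, Finset.sum_filter]
  exact (Finset.sum_erase_add s _ hj).symm

theorem demand_collapse_le {j₀ : J} (hj₀ : j₀ ∈ s) (hmin : ∀ j ∈ s, d j₀ ≤ d j)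
    (hc₀ : 0 ≤ c j₀) (H : ∀ ℓ r, ℓ ≤ r → demand s a d c ℓ r ≤ r - ℓ) (hℓr : ℓ ≤ r) :
    demand (s.erase j₀) (collapse (a j₀) (c j₀) ∘ a) (collapse (a j₀) (c j₀) ∘ d) c ℓ r ≤
      r - ℓ := by
  set a₀ := a j₀
  set c₀ := c j₀
  set L := lowerExpand a₀ c₀ ℓ
  set R := upperExpand a₀ c₀ r
  have hLR := upperExpand_sub_lowerExpand (a₀ := a₀) (c₀ := c₀) hℓr
  have hcollapse : demand (s.erase j₀) (collapse a₀ c₀ ∘ a) (collapse a₀ c₀ ∘ d) c ℓ r =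
      demand (s.erase j₀) a d c L R := by
    refine Finset.sum_congr (Finset.filter_congr fun j _ => ?_) fun _ _ => rfl
    rw [Function.comp_apply, Function.comp_apply, gc_lowerExpand_collapse hc₀,
      gc_collapse_upperExpand hc₀]
  have hdemand := H L R (by split_ifs at hLR <;> linarith)
  rw [demand_eq_demand_erase_add hj₀] at hdemand
  rw [hcollapse]
  by_cases hj₀LR : L ≤ a₀ ∧ d j₀ ≤ R
  · rw [if_pos hj₀LR] at hdemand
    split_ifs at hLR <;> linarith
  rw [if_neg hj₀LR] at hdemand
  by_cases hstraddle : ℓ ≤ a₀ ∧ a₀ ≤ r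
  · have hL : L = ℓ := if_pos hstraddle.1
    -- every remaining window ends after `d j₀ > R`
    have hempty : demand (s.erase j₀) a d c L R = 0 := Finset.sum_eq_zero fun j hj => by
      obtain ⟨hj, -, hjR⟩ := Finset.mem_filter.1 hj
      exact absurd ⟨hL ▸ hstraddle.1, (hmin j (Finset.mem_of_mem_erase hj)).trans hjR⟩ hj₀LR
    linarith
  · rw [if_neg hstraddle] at hLR
    linarith

variable (s a d c) in
theorem exists_isSchedule_of_demand_le (had : ∀ j ∈ s, a j ≤ d j) (hc : ∀ j ∈ s, 0 ≤ c j)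
    (H : ∀ ℓ r, ℓ ≤ r → demand s a d c ℓ r ≤ r - ℓ) : ∃ S, IsSchedule s a d c S := by
  induction s using Finset.strongInduction generalizing a d with
  | H s ih =>
  rcases s.eq_empty_or_nonempty with rfl | hne
  · exact ⟨fun _ => ∅, by simp [IsSchedule]⟩
  obtain ⟨j₀, hj₀, hmin⟩ := s.exists_min_image d hne
  set a₀ := a j₀
  set c₀ := c j₀
  have hc₀ : 0 ≤ c₀ := hc j₀ hj₀
  have hslot : a₀ + c₀ ≤ d j₀ := by
    have hle := H a₀ (d j₀) (had j₀ hj₀)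
    have : c₀ ≤ demand s a d c a₀ (d j₀) :=
      Finset.single_le_sum (fun j hj => hc j (Finset.mem_filter.1 hj).1)
        (Finset.mem_filter.2 ⟨hj₀, le_rfl, le_rfl⟩)
    linarith
  obtain ⟨S, hS⟩ := ih (s.erase j₀) (Finset.erase_ssubset hj₀) (collapse a₀ c₀ ∘ a)
    (collapse a₀ c₀ ∘ d) (fun j hj => (gc_lowerExpand_collapse hc₀).monotone_u
      (had j (Finset.mem_of_mem_erase hj)))
    (fun j hj => hc j (Finset.mem_of_mem_erase hj))
    (fun _ _ => demand_collapse_le hj₀ hmin hc₀ H)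
  have hnew := (hS.image_lowerExpand hc₀).insert (Finset.notMem_erase j₀ s) measurableSet_Ioc
    (Ioc_subset_Icc_self.trans (Icc_subset_Icc le_rfl hslot))
    (by rw [Real.volume_real_Ioc_of_le (by linarith), add_sub_cancel_left])
    (fun i _ => disjoint_left.2 fun t ht ⟨x, _, hx⟩ => lowerExpand_notMem_Ioc (hx ▸ ht))
  rw [Finset.insert_erase hj₀] at hnew
  exact ⟨_, hnew⟩

end Sufficiency

open MeasureTheory in
theorem stmt_14 (J : Type*) [Fintype J] (a d c : J → ℝ)
    (had : ∀ j, a j ≤ d j) (hc : ∀ j, 0 ≤ c j) :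
    (∃ S : J → Set ℝ,
        (Pairwise fun i j => Disjoint (S i) (S j)) ∧
        ∀ j, MeasurableSet (S j) ∧ S j ⊆ Set.Icc (a j) (d j) ∧
          c j ≤ (volume (S j)).toReal) ↔
    (∀ ℓ r : ℝ, ℓ ≤ r →
        ∑ j ∈ Finset.univ.filter (fun j => ℓ ≤ a j ∧ d j ≤ r), c j ≤ r - ℓ) := by
  classical
  constructor
  · rintro ⟨S, hdisj, hS⟩ ℓ r hℓr
    exact IsSchedule.demand_le (s := Finset.univ)
      ⟨fun i _ j _ hij => hdisj hij, fun j _ => hS j⟩ hℓr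
  · intro H
    obtain ⟨S, hdisj, hS⟩ :=
      exists_isSchedule_of_demand_le Finset.univ a d c (fun j _ => had j) (fun j _ => hc j) H
    exact ⟨S, fun i j hij => hdisj (Finset.mem_univ i) (Finset.mem_univ j) hij,
      fun j => hS j (Finset.mem_univ j)⟩
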